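/- Equivalence of algebraic and sectional curvature: for every algebraic curvature tensor R on T, Φ⁺R is a sectional curvature tensor; for every sectional curvature tensor S on T, Φ⁻S is an algebraic curvature tensor; moreover Φ⁻(Φ⁺R) = R for every algebraic curvature tensor R and Φ⁺(Φ⁻S) = S for every sectional curvature tensor S, so Φ⁺ and Φ⁻ are mutually inverse linear isomorphisms between the space of algebraic curvature tensors and the space of sectional curvature tensors on T. -/

import Mathlib

open scoped BigOperators

variable {T : Type*} [NormedAddCommGroup T] [InnerProductSpace ℝ T] [FiniteDimensional ℝ T]

/-- A map `T → T → T → T → ℝ` that is linear in each of its four arguments. -/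
def IsQuadrilinear (R : T → T → T → T → ℝ) : Prop :=
  (∀ Y U V, IsLinearMap ℝ fun X => R X Y U V) ∧
  (∀ X U V, IsLinearMap ℝ fun Y => R X Y U V) ∧
  (∀ X Y V, IsLinearMap ℝ fun U => R X Y U V) ∧
  (∀ X Y U, IsLinearMap ℝ fun V => R X Y U V)

/-- An algebraic curvature tensor on `T`. -/
def IsAlgCurv (R : T → T → T → T → ℝ) : Prop :=
  IsQuadrilinear R ∧
  (∀ X Y U V : T, R X Y U V = -R Y X U V) ∧
  (∀ X Y U V : T, R X Y U V = -R X Y V U) ∧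
  (∀ X Y Z V : T, R X Y Z V + R Y Z X V + R Z X Y V = 0)

/-- A sectional curvature tensor on `T`. -/
def IsSecCurv (S : T → T → T → T → ℝ) : Prop :=
  IsQuadrilinear S ∧
  (∀ X Y U V : T, S X Y U V = S Y X U V) ∧
  (∀ X Y U V : T, S X Y U V = S X Y V U) ∧
  (∀ X V : T, S X X X V = 0)

/-- `(Φ⁺R)(X,Y;U,V) := −2·(R(X,U;Y,V) + R(X,V;Y,U))`. -/
noncomputable def PhiPlus (R : T → T → T → T → ℝ) : T → T → T → T → ℝ :=
  fun X Y U V => -2 * (R X U Y V + R X V Y U)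

/-- `(Φ⁻S)(X,Y;U,V) := −(1/6)·(S(X,U;Y,V) − S(X,V;Y,U))`. -/
noncomputable def PhiMinus (S : T → T → T → T → ℝ) : T → T → T → T → ℝ :=
  fun X Y U V => -(1 / 6) * (S X U Y V - S X V Y U)

/-!
Both kinds of tensors have the pair symmetry `T(X,Y;U,V) = T(U,V;X,Y)` and satisfy the cyclic
identity in the first three slots. For an algebraic tensor these are the usual consequences of
the Bianchi identity; for a sectional tensor the cyclic identity comes from polarizing the cubic
form `X ↦ S(X,X;X,V) = 0`, and pair symmetry then follows as in the algebraic case. Once these are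
available, every claim is a linear identity among finitely many values of the tensor, and
`Φ⁺`, `Φ⁻` preserve multilinearity because they are linear combinations of slot permutations.
-/

section

omit [FiniteDimensional ℝ T]

namespace IsQuadrilinear

variable {R S : T → T → T → T → ℝ}

lemma map_add₁ (hR : IsQuadrilinear R) (x x' y u v : T) :
    R (x + x') y u v = R x y u v + R x' y u v := (hR.1 y u v).map_add x x'

lemma map_add₂ (hR : IsQuadrilinear R) (x y y' u v : T) :
    R x (y + y') u v = R x y u v + R x y' u v := (hR.2.1 x u v).map_add y y'

lemma map_add₃ (hR : IsQuadrilinear R) (x y u u' v : T) :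
    R x y (u + u') v = R x y u v + R x y u' v := (hR.2.2.1 x y v).map_add u u'

lemma map_neg₁ (hR : IsQuadrilinear R) (x y u v : T) :
    R (-x) y u v = -R x y u v := (hR.1 y u v).map_neg x

lemma map_neg₂ (hR : IsQuadrilinear R) (x y u v : T) :
    R x (-y) u v = -R x y u v := (hR.2.1 x u v).map_neg y

lemma map_neg₃ (hR : IsQuadrilinear R) (x y u v : T) :
    R x y (-u) v = -R x y u v := (hR.2.2.1 x y v).map_neg u

lemma comp_swap₂₃ (hR : IsQuadrilinear R) : IsQuadrilinear fun X Y U V => R X U Y V :=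
  ⟨fun Y U V => hR.1 U Y V, fun X U V => hR.2.2.1 X U V, fun X Y V => hR.2.1 X Y V,
    fun X Y U => hR.2.2.2 X U Y⟩

lemma comp_cycle₂₃₄ (hR : IsQuadrilinear R) : IsQuadrilinear fun X Y U V => R X V Y U :=
  ⟨fun Y U V => hR.1 V Y U, fun X U V => hR.2.2.1 X V U, fun X Y V => hR.2.2.2 X V Y,
    fun X Y U => hR.2.1 X Y U⟩

lemma add (hR : IsQuadrilinear R) (hS : IsQuadrilinear S) :
    IsQuadrilinear fun X Y U V => R X Y U V + S X Y U V :=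
  ⟨fun Y U V => ((hR.1 Y U V).mk' _ + (hS.1 Y U V).mk' _).isLinear,
    fun X U V => ((hR.2.1 X U V).mk' _ + (hS.2.1 X U V).mk' _).isLinear,
    fun X Y V => ((hR.2.2.1 X Y V).mk' _ + (hS.2.2.1 X Y V).mk' _).isLinear,
    fun X Y U => ((hR.2.2.2 X Y U).mk' _ + (hS.2.2.2 X Y U).mk' _).isLinear⟩

lemma sub (hR : IsQuadrilinear R) (hS : IsQuadrilinear S) :
    IsQuadrilinear fun X Y U V => R X Y U V - S X Y U V :=
  ⟨fun Y U V => ((hR.1 Y U V).mk' _ - (hS.1 Y U V).mk' _).isLinear,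
    fun X U V => ((hR.2.1 X U V).mk' _ - (hS.2.1 X U V).mk' _).isLinear,
    fun X Y V => ((hR.2.2.1 X Y V).mk' _ - (hS.2.2.1 X Y V).mk' _).isLinear,
    fun X Y U => ((hR.2.2.2 X Y U).mk' _ - (hS.2.2.2 X Y U).mk' _).isLinear⟩

lemma const_mul (hR : IsQuadrilinear R) (c : ℝ) : IsQuadrilinear fun X Y U V => c * R X Y U V :=
  ⟨fun Y U V => (c • (hR.1 Y U V).mk' _).isLinear,
    fun X U V => (c • (hR.2.1 X U V).mk' _).isLinear,
    fun X Y V => (c • (hR.2.2.1 X Y V).mk' _).isLinear,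
    fun X Y U => (c • (hR.2.2.2 X Y U).mk' _).isLinear⟩

lemma phiPlus (hR : IsQuadrilinear R) : IsQuadrilinear (PhiPlus R) :=
  (hR.comp_swap₂₃.add hR.comp_cycle₂₃₄).const_mul (-2)

lemma phiMinus (hS : IsQuadrilinear S) : IsQuadrilinear (PhiMinus S) :=
  (hS.comp_swap₂₃.sub hS.comp_cycle₂₃₄).const_mul (-(1 / 6))

end IsQuadrilinear

namespace IsAlgCurv

variable {R : T → T → T → T → ℝ}

lemma pair_symm (hR : IsAlgCurv R) (X Y U V : T) : R X Y U V = R U V X Y := by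
  obtain ⟨-, hA₁₂, hA₃₄, hB⟩ := hR
  linarith [hB Y U X V, hB U X V Y, hB X V Y U, hB V Y U X, hA₁₂ V U X Y, hA₁₂ Y X U V,
    hA₃₄ U X V Y, hA₃₄ X V U Y, hA₃₄ V Y X U, hA₃₄ Y X V U, hA₃₄ Y U V X, hA₃₄ U V Y X]

lemma isSecCurv_phiPlus (hR : IsAlgCurv R) : IsSecCurv (PhiPlus R) := by
  refine ⟨hR.1.phiPlus, fun X Y U V => ?_, fun X Y U V => ?_, fun X V => ?_⟩
  · simp only [PhiPlus]
    linarith [hR.pair_symm Y U X V, hR.pair_symm Y V X U]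
  · simp only [PhiPlus]
    ring
  · simp only [PhiPlus]
    linarith [hR.2.1 X X X V, hR.2.2.1 X V X X]

lemma phiMinus_phiPlus (hR : IsAlgCurv R) : PhiMinus (PhiPlus R) = R := by
  funext X Y U V
  simp only [PhiMinus, PhiPlus]
  linarith [hR.2.2.1 X Y V U, hR.2.2.1 X U V Y, hR.2.1 Y X U V, hR.2.2.2 X U Y V,
    hR.pair_symm X V U Y]

end IsAlgCurv

namespace IsSecCurv

variable {S : T → T → T → T → ℝ}

-- Adding the expansions of `S(W,W;W,V) = 0` at `W = X + Y` and `W = X - Y` kills the terms linear in `Y`.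
lemma two_mul_add_eq_zero (hS : IsSecCurv S) (X Y V : T) :
    2 * S X Y Y V + S Y Y X V = 0 := by
  obtain ⟨hq, h₁₂, -, h₀⟩ := hS
  have expand : ∀ Y : T, S X X Y V + 2 * S X Y X V + 2 * S X Y Y V + S Y Y X V = 0 := by
    intro Y
    have e := h₀ (X + Y) V
    simp only [hq.map_add₁, hq.map_add₂, hq.map_add₃, h₀] at e
    linarith [h₁₂ Y X X V, h₁₂ Y X Y V]
  have plus := expand Y
  have minus := expand (-Y)
  simp only [hq.map_neg₁, hq.map_neg₂, hq.map_neg₃, neg_neg] at minus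
  linarith

lemma cyclic (hS : IsSecCurv S) (X Y Z V : T) : S X Y Z V + S Y Z X V + S Z X Y V = 0 := by
  have e := hS.two_mul_add_eq_zero X (Y + Z) V
  simp only [hS.1.map_add₁, hS.1.map_add₂, hS.1.map_add₃] at e
  linarith [hS.two_mul_add_eq_zero X Y V, hS.two_mul_add_eq_zero X Z V, hS.2.1 Z Y X V,
    hS.2.1 X Z Y V, hS.2.1 Z X Y V]

lemma pair_symm (hS : IsSecCurv S) (X Y U V : T) : S X Y U V = S U V X Y := by
  have antisymm_defect : ∀ X Y U V : T, S X Y U V - S U V X Y = S X V Y U - S Y U X V := by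
    intro X Y U V
    linarith [hS.cyclic X Y U V, hS.cyclic U V X Y, hS.2.1 V X U Y, hS.2.2.1 X V U Y,
      hS.2.2.1 X U V Y, hS.2.1 U X Y V]
  linarith [antisymm_defect X Y U V, antisymm_defect V X Y U, hS.2.1 V X Y U, hS.2.1 Y U V X,
    hS.2.2.1 Y U X V, hS.2.1 V U X Y, hS.2.2.1 X Y V U]

lemma isAlgCurv_phiMinus (hS : IsSecCurv S) : IsAlgCurv (PhiMinus S) := by
  have h₁₂ := hS.2.1
  have h₃₄ := hS.2.2.1
  refine ⟨hS.1.phiMinus, fun X Y U V => ?_, fun X Y U V => ?_, fun X Y Z V => ?_⟩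
  · simp only [PhiMinus]
    linarith [hS.cyclic X U Y V, hS.cyclic X V Y U, h₁₂ U Y X V, h₁₂ Y X U V, h₁₂ V Y X U,
      h₁₂ Y X V U, h₃₄ X Y V U]
  · simp only [PhiMinus]
    ring
  · simp only [PhiMinus]
    linarith [hS.cyclic X Z Y V, hS.cyclic Y Z X V, hS.pair_symm X V Y Z, hS.pair_symm Y V Z X,
      hS.pair_symm Z V X Y, h₁₂ Z Y X V, h₁₂ Y X Z V]

lemma phiPlus_phiMinus (hS : IsSecCurv S) : PhiPlus (PhiMinus S) = S := by
  funext X Y U V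
  simp only [PhiPlus, PhiMinus]
  linarith [hS.cyclic X U V Y, hS.2.1 V X U Y, hS.pair_symm U V X Y, hS.2.2.1 X Y V U]

end IsSecCurv

end

theorem phiPlus_phiMinus_equiv :
    (∀ R : T → T → T → T → ℝ, IsAlgCurv R → IsSecCurv (PhiPlus R)) ∧
    (∀ S : T → T → T → T → ℝ, IsSecCurv S → IsAlgCurv (PhiMinus S)) ∧
    (∀ R : T → T → T → T → ℝ, IsAlgCurv R → PhiMinus (PhiPlus R) = R) ∧
    (∀ S : T → T → T → T → ℝ, IsSecCurv S → PhiPlus (PhiMinus S) = S) :=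
  ⟨fun _ => IsAlgCurv.isSecCurv_phiPlus, fun _ => IsSecCurv.isAlgCurv_phiMinus,
    fun _ => IsAlgCurv.phiMinus_phiPlus, fun _ => IsSecCurv.phiPlus_phiMinus⟩
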